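/- arXiv:1606.04178 — 5 statements merged into one kernel-verified Lean document; each statement's English description precedes it below -/
import Mathlib

section
/- For all real t ≥ 0 and λ ∈ [1,2], |sin(t) - λ⁻¹ sin(λ t)| ≤ 2 min{1, t³}. -/
open Real

lemma abs_sin_sub_inv_mul_sin_le_cube (t : ℝ) {l : ℝ} (hl : l ≠ 0) :
    |sin t - l⁻¹ * sin (l * t)| ≤ (1 + l ^ 2) / 6 * |t| ^ 3 := by
  have hsplit : sin t - l⁻¹ * sin (l * t) = l⁻¹ * (l * t - sin (l * t)) - (t - sin t) := by
    field_simp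
    ring
  calc |sin t - l⁻¹ * sin (l * t)|
      ≤ |l⁻¹| * |l * t - sin (l * t)| + |t - sin t| := by
        rw [hsplit, ← abs_mul]
        exact abs_sub _ _
    _ ≤ |l⁻¹| * (|l * t| ^ 3 / 6) + |t| ^ 3 / 6 := by
        gcongr
        · exact abs_sub_sin_le _
        · exact abs_sub_sin_le _
    _ = (1 + l ^ 2) / 6 * |t| ^ 3 := by
        rw [abs_inv, abs_mul, ← sq_abs l]
        field_simp
        ring

lemma abs_sin_sub_inv_mul_sin_le_two (t : ℝ) {l : ℝ} (hl : 1 ≤ |l|) :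
    |sin t - l⁻¹ * sin (l * t)| ≤ 2 :=
  calc |sin t - l⁻¹ * sin (l * t)|
      ≤ |sin t| + |l|⁻¹ * |sin (l * t)| := by
        rw [← abs_inv, ← abs_mul]
        exact abs_sub _ _
    _ ≤ 1 + 1 * 1 := by
        gcongr
        · exact abs_sin_le_one t
        · exact inv_le_one_of_one_le₀ hl
        · exact abs_sin_le_one _
    _ = 2 := by norm_num

theorem stmt_0 :
    ∀ t : ℝ, 0 ≤ t → ∀ l : ℝ, l ∈ Set.Icc (1:ℝ) 2 →
      |Real.sin t - l⁻¹ * Real.sin (l * t)| ≤ 2 * min 1 (t ^ 3) := by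
  rintro t ht l ⟨hl1, hl2⟩
  rw [mul_min_of_nonneg _ _ zero_le_two, mul_one]
  refine le_min (abs_sin_sub_inv_mul_sin_le_two t (by rwa [abs_of_nonneg (by linarith)])) ?_
  calc |sin t - l⁻¹ * sin (l * t)| ≤ (1 + l ^ 2) / 6 * |t| ^ 3 :=
        abs_sin_sub_inv_mul_sin_le_cube t (by positivity)
    _ ≤ 2 * t ^ 3 := by
        rw [abs_of_nonneg ht]
        gcongr
        nlinarith
end

section
/- Let f : [x₀, ∞) → ℝ with A := sup { |f(x) − f(y)| : x₀ < x ≤ y ≤ 2x } < ∞ and δ = A/log 2, and let a ≥ 1. Then there is C > 0 such that for all r, t > 0 with x > x₀ and r·x > x₀: e^{t f(x)} · |e^{−t f(r x)} − e^{−t f(r a x)}| ≤ t · C^t · max{r, 1/r}^{δ t} · |f(r x) − f(r a x)|. -/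
/-!
Telescoping along dyadic scales turns the increment bound `A` into
`|f x - f y| ≤ A + δ |log (y / x)|` for all `x, y > x₀`. Since
`|e^{-u} - e^{-v}| ≤ max (e^{-u}) (e^{-v}) |u - v|`, the left-hand side is at most
`t |f (r x) - f (r a x)|` times `e^{t (f x - f (r x))}` or `e^{t (f x - f (r a x))}`, and both
exponents are at most `t (2 A + δ log a + δ |log r|)`; finally `max r r⁻¹ = e^{|log r|}`.
-/

open Real

theorem abs_exp_sub_exp_le_max_mul (a b : ℝ) :
    |exp a - exp b| ≤ max (exp a) (exp b) * |a - b| := by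
  wlog hba : b ≤ a generalizing a b
  · rw [abs_sub_comm, abs_sub_comm a, max_comm]
    exact this b a (le_of_not_ge hba)
  have hexp : exp b = exp a * exp (b - a) := by rw [← exp_add, add_sub_cancel]
  rw [abs_of_nonneg (sub_nonneg.2 (exp_le_exp.2 hba)), abs_of_nonneg (sub_nonneg.2 hba),
    max_eq_left (exp_le_exp.2 hba), hexp]
  nlinarith [add_one_le_exp (b - a), exp_pos a]

theorem max_self_inv_eq_exp_abs_log {r : ℝ} (hr : 0 < r) : max r r⁻¹ = exp |log r| := by
  rw [abs_eq_max_neg, exp_monotone.map_max, exp_neg, exp_log hr]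

def HasDyadicIncrementBound (f : ℝ → ℝ) (x₀ A : ℝ) : Prop :=
  ∀ x y : ℝ, x₀ < x → x ≤ y → y ≤ 2 * x → |f x - f y| ≤ A

namespace HasDyadicIncrementBound

variable {f : ℝ → ℝ} {x₀ A x y : ℝ}

theorem nonneg (h : HasDyadicIncrementBound f x₀ A) : 0 ≤ A := by
  simpa using h (|x₀| + 1) (|x₀| + 1) (by linarith [le_abs_self x₀]) le_rfl
    (by linarith [abs_nonneg x₀])

theorem abs_sub_le_nat_mul (h : HasDyadicIncrementBound f x₀ A) (hx₀ : 0 ≤ x₀) (n : ℕ)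
    (hx : x₀ < x) (hxy : x ≤ y) (hy : y ≤ 2 ^ n * x) : |f x - f y| ≤ n * A := by
  induction n generalizing y with
  | zero =>
    obtain rfl : y = x := le_antisymm (by simpa using hy) hxy
    simp
  | succ n ih =>
    push_cast
    by_cases hyn : y ≤ 2 ^ n * x
    · linarith [ih hxy hyn, h.nonneg]
    · have hx_le : x ≤ 2 ^ n * x :=
        le_mul_of_one_le_left (hx₀.trans hx.le) (one_le_pow₀ one_le_two)
      calc |f x - f y| ≤ |f x - f (2 ^ n * x)| + |f (2 ^ n * x) - f y| := abs_sub_le _ _ _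
        _ ≤ n * A + A := by
          refine add_le_add (ih hx_le le_rfl) (h _ _ (by linarith) (by linarith) ?_)
          rw [pow_succ] at hy
          linarith
        _ = (n + 1) * A := by ring

theorem abs_sub_le_add_mul_log (h : HasDyadicIncrementBound f x₀ A) (hx₀ : 0 ≤ x₀)
    (hx : x₀ < x) (hxy : x ≤ y) : |f x - f y| ≤ A + A / log 2 * log (y / x) := by
  have hx0 : 0 < x := hx₀.trans_lt hx
  have hlogb : 0 ≤ logb 2 (y / x) := logb_nonneg one_lt_two ((one_le_div hx0).2 hxy)
  have hy : y ≤ 2 ^ ⌈logb 2 (y / x)⌉₊ * x := by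
    rw [← div_le_iff₀ hx0, ← rpow_natCast]
    exact (logb_le_iff_le_rpow one_lt_two (div_pos (hx0.trans_le hxy) hx0)).1 (Nat.le_ceil _)
  calc |f x - f y| ≤ ⌈logb 2 (y / x)⌉₊ * A := h.abs_sub_le_nat_mul hx₀ _ hx hxy hy
    _ ≤ (logb 2 (y / x) + 1) * A :=
      mul_le_mul_of_nonneg_right (Nat.ceil_lt_add_one hlogb).le h.nonneg
    _ = A + A / log 2 * log (y / x) := by rw [logb]; ring

theorem abs_sub_le_add_mul_abs_log (h : HasDyadicIncrementBound f x₀ A) (hx₀ : 0 ≤ x₀)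
    (hx : x₀ < x) (hy : x₀ < y) : |f x - f y| ≤ A + A / log 2 * |log (y / x)| := by
  rcases le_total x y with hxy | hyx
  · rw [abs_of_nonneg (log_nonneg ((one_le_div (hx₀.trans_lt hx)).2 hxy))]
    exact h.abs_sub_le_add_mul_log hx₀ hx hxy
  · rw [abs_sub_comm, ← abs_neg (log _), ← log_inv, inv_div,
      abs_of_nonneg (log_nonneg ((one_le_div (hx₀.trans_lt hy)).2 hyx))]
    exact h.abs_sub_le_add_mul_log hx₀ hy hyx

theorem max_sub_le (h : HasDyadicIncrementBound f x₀ A) (hx₀ : 0 ≤ x₀) {a r : ℝ}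
    (ha : 1 ≤ a) (hr : 0 < r) (hx : x₀ < x) (hrx : x₀ < r * x) :
    max (f x - f (r * x)) (f x - f (r * a * x)) ≤
      2 * A + A / log 2 * log a + A / log 2 * |log r| := by
  have hx0 : 0 < x := hx₀.trans_lt hx
  have hδ : 0 ≤ A / log 2 := div_nonneg h.nonneg (log_pos one_lt_two).le
  have hscale : f x - f (r * x) ≤ A + A / log 2 * |log r| := by
    have := h.abs_sub_le_add_mul_abs_log hx₀ hx hrx
    rw [mul_div_cancel_right₀ r hx0.ne'] at this
    exact (le_abs_self _).trans this
  have hdilate : f (r * x) - f (r * a * x) ≤ A + A / log 2 * log a := by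
    have hra : r * x ≤ r * a * x := by nlinarith
    have := h.abs_sub_le_add_mul_log hx₀ hrx hra
    rw [show r * a * x / (r * x) = a by field_simp] at this
    exact (le_abs_self _).trans this
  have : 0 ≤ A / log 2 * log a := mul_nonneg hδ (log_nonneg ha)
  exact max_le (by linarith [h.nonneg]) (by linarith)

theorem exp_mul_mul_max_exp_neg_le (h : HasDyadicIncrementBound f x₀ A) (hx₀ : 0 ≤ x₀)
    {a r t : ℝ} (ha : 1 ≤ a) (hr : 0 < r) (ht : 0 ≤ t) (hx : x₀ < x) (hrx : x₀ < r * x) :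
    exp (t * f x) * max (exp (-(t * f (r * x)))) (exp (-(t * f (r * a * x)))) ≤
      exp (2 * A + A / log 2 * log a) ^ t * max r r⁻¹ ^ (A / log 2 * t) := by
  rw [max_self_inv_eq_exp_abs_log hr, ← exp_mul, ← exp_mul, ← exp_add,
    mul_max_of_nonneg _ _ (exp_pos _).le, ← exp_add, ← exp_add]
  have hE := h.max_sub_le hx₀ ha hr hx hrx
  have h₁ := mul_le_mul_of_nonneg_left ((le_max_left _ _).trans hE) ht
  have h₂ := mul_le_mul_of_nonneg_left ((le_max_right _ _).trans hE) ht
  exact max_le (exp_le_exp.2 (by linarith)) (exp_le_exp.2 (by linarith))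

end HasDyadicIncrementBound

theorem stmt_2 (x₀ : ℝ) (hx₀ : 0 ≤ x₀) (f : ℝ → ℝ) (A : ℝ)
    (hA : ∀ x y : ℝ, x₀ < x → x ≤ y → y ≤ 2 * x → |f x - f y| ≤ A)
    (δ : ℝ) (hδ : δ = A / Real.log 2) (a : ℝ) (ha : 1 ≤ a) :
    ∃ C > (0:ℝ), ∀ r t x : ℝ, 0 < r → 0 < t → x₀ < x → x₀ < r * x →
      Real.exp (t * f x) *
          |Real.exp (-(t * f (r * x))) - Real.exp (-(t * f (r * a * x)))| ≤
        t * C ^ t * (max r r⁻¹) ^ (δ * t) * |f (r * x) - f (r * a * x)| := by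
  have hA : HasDyadicIncrementBound f x₀ A := hA
  subst hδ
  refine ⟨exp (2 * A + A / log 2 * log a), exp_pos _, fun r t x hr ht hx hrx => ?_⟩
  have hexp := abs_exp_sub_exp_le_max_mul (-(t * f (r * x))) (-(t * f (r * a * x)))
  rw [neg_sub_neg, ← mul_sub, abs_mul, abs_of_pos ht, abs_sub_comm (f (r * a * x))] at hexp
  calc _ ≤ exp (t * f x) * max (exp (-(t * f (r * x)))) (exp (-(t * f (r * a * x)))) *
          (t * |f (r * x) - f (r * a * x)|) := by
        rw [mul_assoc _ _ (t * _)]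
        exact mul_le_mul_of_nonneg_left hexp (exp_pos _).le
    _ ≤ exp (2 * A + A / log 2 * log a) ^ t * max r r⁻¹ ^ (A / log 2 * t) *
          (t * |f (r * x) - f (r * a * x)|) := by
        have := hA.exp_mul_mul_max_exp_neg_le hx₀ ha hr ht.le hx hrx
        exact mul_le_mul_of_nonneg_right this (by positivity)
    _ = _ := by ring
end

section
/- Let μ be a measure on (0,∞) with ∫ min{1,s} dμ(s) < ∞, and define ν₁(y) = μ((y,∞)) for y > 0, ψ(u) = ∫₀^∞ (1 − cos(uy)) ν₁(y) dy, and K₁(u⁻¹) = 2∫₀^{u⁻¹} u² y² ν₁(y) dy for u > 0. Then for all u > 0 and λ ∈ [1,2]: |ψ(λu) − ψ(u)| ≤ 3 K₁(1/u). -/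
open MeasureTheory ENNReal Set Real

lemma sub_cube_le_sin {s : ℝ} (hs : 0 ≤ s) : s - s^3/6 ≤ Real.sin s := by
  have hmono : Monotone (fun s : ℝ => Real.sin s - s + s^3/6) := by
    apply monotone_of_deriv_nonneg
    · fun_prop
    · intro x
      have h : HasDerivAt (fun s : ℝ => Real.sin s - s + s^3/6)
          (Real.cos x - 1 + (3 * x^2)/6) x :=
        ((Real.hasDerivAt_sin x).sub (hasDerivAt_id x)).add
          ((hasDerivAt_pow 3 x).div_const 6)
      rw [h.deriv]
      have := Real.one_sub_sq_div_two_le_cos (x := x)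
      nlinarith
  have h0 := hmono hs
  simp only [Real.sin_zero] at h0
  nlinarith [h0]

lemma abs_sin_sub_le {s : ℝ} (hs : 0 ≤ s) : |Real.sin s - s| ≤ s^3/6 := by
  rw [abs_sub_comm, abs_le]
  have h1 := sub_cube_le_sin hs
  have h2 := Real.sin_le hs
  have h3 : 0 ≤ s^3 := pow_nonneg hs 3
  constructor <;> [linarith; linarith]

lemma key_sin_bound {t l : ℝ} (ht : 0 ≤ t) (hl1 : 1 ≤ l) (hl2 : l ≤ 2) :
    |Real.sin t - l⁻¹ * Real.sin (l * t)| ≤ 2 * min 1 (t^3) := by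
  have hl0 : 0 < l := by linarith
  rcases le_or_gt t 1 with h | h
  · have hmin : min 1 (t^3) = t^3 := min_eq_right (pow_le_one₀ ht h)
    rw [hmin]
    have h1 := abs_sin_sub_le ht
    have h2 := abs_sin_sub_le (mul_nonneg hl0.le ht)
    have h3 : |Real.sin t - l⁻¹ * Real.sin (l * t)| ≤
        |Real.sin t - t| + l⁻¹ * |Real.sin (l*t) - l*t| := by
      have : Real.sin t - l⁻¹ * Real.sin (l * t)
          = (Real.sin t - t) - l⁻¹ * (Real.sin (l*t) - l*t) := by
        field_simp; ring
      rw [this]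
      calc _ ≤ |Real.sin t - t| + |l⁻¹ * (Real.sin (l*t) - l*t)| := abs_sub _ _
        _ = _ := by rw [abs_mul, abs_of_pos (inv_pos.2 hl0)]
    have h4 : l⁻¹ * |Real.sin (l*t) - l*t| ≤ l⁻¹ * ((l*t)^3/6) :=
      mul_le_mul_of_nonneg_left h2 (inv_pos.2 hl0).le
    have h5 : l⁻¹ * ((l*t)^3/6) = l^2 * t^3 / 6 := by
      field_simp
    have h6 : l^2 * t^3 ≤ 4 * t^3 := by
      have hl4 : l^2 ≤ 4 := by nlinarith
      exact mul_le_mul_of_nonneg_right hl4 (pow_nonneg ht 3)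
    linarith [pow_nonneg ht 3]
  · have hmin : min 1 (t^3) = 1 := min_eq_left (one_le_pow₀ h.le)
    rw [hmin]
    have h1 : |Real.sin t| ≤ 1 := Real.abs_sin_le_one t
    have h2 : |Real.sin (l*t)| ≤ 1 := Real.abs_sin_le_one (l*t)
    have h3 : |Real.sin t - l⁻¹ * Real.sin (l * t)| ≤ |Real.sin t| + l⁻¹ * |Real.sin (l*t)| := by
      calc _ ≤ |Real.sin t| + |l⁻¹ * Real.sin (l*t)| := abs_sub _ _
        _ = _ := by rw [abs_mul, abs_of_pos (inv_pos.2 hl0)]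
    have hinv : l⁻¹ ≤ 1 := by
      rw [inv_le_one_iff₀]; right; exact hl1
    nlinarith [abs_nonneg (Real.sin (l*t)), inv_pos.2 hl0]

lemma swap_gen (μ : Measure ℝ) [SigmaFinite μ]
    (g : ℝ → ℝ≥0∞) (hg : Measurable g) (s : Set ℝ) :
    ∫⁻ y in s, g y * μ (Set.Ioi y) = ∫⁻ x, ∫⁻ y in Set.Iio x ∩ s, g y ∂volume ∂μ := by
  have step1 : ∀ y : ℝ, g y * μ (Set.Ioi y)
      = ∫⁻ x, g y * (Set.Ioi y).indicator 1 x ∂μ := by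
    intro y
    rw [lintegral_const_mul _ (measurable_one.indicator measurableSet_Ioi),
      lintegral_indicator_one measurableSet_Ioi]
  simp_rw [step1]
  rw [lintegral_lintegral_swap]
  · apply lintegral_congr
    intro x
    have : ∀ y : ℝ, g y * (Set.Ioi y).indicator 1 x = (Set.Iio x).indicator g y := by
      intro y
      simp only [Set.indicator_apply, Set.mem_Ioi, Set.mem_Iio]
      split <;> simp
    simp_rw [this]
    rw [lintegral_indicator measurableSet_Iio, Measure.restrict_restrict measurableSet_Iio]
  · apply Measurable.aemeasurable
    apply Measurable.mul
    · exact hg.comp measurable_fst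
    · have : (fun p : ℝ × ℝ => (Set.Ioi p.1).indicator (1 : ℝ → ℝ≥0∞) p.2)
          = Set.indicator {p : ℝ × ℝ | p.1 < p.2} 1 := by
        ext p; simp [Set.indicator_apply]
      exact this ▸ measurable_one.indicator (measurableSet_lt measurable_fst measurable_snd)

lemma lint_Ioo (f : ℝ → ℝ) (hf : Continuous f) (hf0 : ∀ y, 0 ≤ f y) (m : ℝ) (hm : 0 ≤ m) :
    ∫⁻ y in Set.Ioo 0 m, ENNReal.ofReal (f y) = ENNReal.ofReal (∫ y in (0:ℝ)..m, f y) := by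
  rw [intervalIntegral.integral_of_le hm, integral_Ioc_eq_integral_Ioo,
    ofReal_integral_eq_lintegral_ofReal]
  · exact (hf.integrableOn_Icc (a := 0) (b := m)).mono_set Set.Ioo_subset_Icc_self
  · exact Filter.Eventually.of_forall hf0

lemma eval_psi_inner (c x : ℝ) (hc : 0 < c) (hx : 0 < x) :
    ∫⁻ y in Set.Iio x ∩ Set.Ioi 0, ENNReal.ofReal (1 - Real.cos (c * y))
      = ENNReal.ofReal (x - Real.sin (c * x) / c) := by
  have hset : Set.Iio x ∩ Set.Ioi 0 = Set.Ioo 0 x := by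
    ext y; simp [Set.mem_Ioo, and_comm]
  rw [hset, lint_Ioo _ (by continuity) (fun y => by nlinarith [Real.cos_le_one (c*y)]) x hx.le]
  congr 1
  have h1 : IntervalIntegrable (fun _ : ℝ => (1:ℝ)) volume 0 x := intervalIntegrable_const
  have h2 : IntervalIntegrable (fun y : ℝ => Real.cos (c * y)) volume 0 x :=
    (Real.continuous_cos.comp (continuous_const.mul continuous_id)).intervalIntegrable 0 x
  have : (fun y : ℝ => 1 - Real.cos (c * y))
      = fun y => (fun _ => (1:ℝ)) y - (fun y => Real.cos (c*y)) y := rfl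
  rw [this, intervalIntegral.integral_sub h1 h2, intervalIntegral.integral_const,
    intervalIntegral.integral_comp_mul_left (fun t => Real.cos t) hc.ne']
  simp [integral_cos]
  ring

lemma eval_K_inner (r x : ℝ) (hr : 0 < r) (hx : 0 < x) :
    ∫⁻ y in Set.Iio x ∩ Set.Ioo 0 r, ENNReal.ofReal (y ^ 2)
      = ENNReal.ofReal ((min x r) ^ 3 / 3) := by
  have hset : Set.Iio x ∩ Set.Ioo 0 r = Set.Ioo 0 (min x r) := by
    ext y
    simp only [Set.mem_inter_iff, Set.mem_Iio, Set.mem_Ioo, lt_min_iff]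
    tauto
  rw [hset, lint_Ioo _ (by continuity) (fun y => sq_nonneg y) _ (le_min hx.le hr.le)]
  rw [integral_pow]
  norm_num

lemma mu_Ioi_ne_top (μ : Measure ℝ)
    (hμint : ∫⁻ s, ENNReal.ofReal (min 1 s) ∂μ < ⊤) {y : ℝ} (hy : 0 < y) :
    μ (Set.Ioi y) ≠ ⊤ := by
  intro h
  have key : ENNReal.ofReal (min 1 y) * μ (Set.Ioi y)
      ≤ ∫⁻ s, ENNReal.ofReal (min 1 s) ∂μ := by
    rw [← setLIntegral_const (Set.Ioi y) _]
    refine le_trans (setLIntegral_mono (by fun_prop) ?_) (setLIntegral_le_lintegral _ _)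
    intro x hx
    exact ENNReal.ofReal_le_ofReal (min_le_min le_rfl (le_of_lt hx))
  rw [h, ENNReal.mul_top] at key
  · exact absurd (lt_of_le_of_lt key hμint) (lt_irrefl ⊤)
  · simp only [ne_eq, ENNReal.ofReal_eq_zero, not_le]
    exact lt_min one_pos hy

lemma ae_pos (μ : Measure ℝ) (hμ : μ (Set.Iic 0) = 0) : ∀ᵐ x ∂μ, 0 < x := by
  rw [ae_iff]
  convert hμ using 2
  ext x; simp [not_lt]

lemma tonelli_psi (μ : Measure ℝ) [SigmaFinite μ] (hμ : μ (Set.Iic 0) = 0)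
    (hμint : ∫⁻ s, ENNReal.ofReal (min 1 s) ∂μ < ⊤) (c : ℝ) (hc : 0 < c) :
    ∫⁻ y in Set.Ioi (0:ℝ), ENNReal.ofReal ((1 - Real.cos (c * y)) * (μ (Set.Ioi y)).toReal)
      = ∫⁻ x, ENNReal.ofReal (x - Real.sin (c * x) / c) ∂μ := by
  have step1 : ∫⁻ y in Set.Ioi (0:ℝ),
        ENNReal.ofReal ((1 - Real.cos (c * y)) * (μ (Set.Ioi y)).toReal)
      = ∫⁻ y in Set.Ioi (0:ℝ), ENNReal.ofReal (1 - Real.cos (c * y)) * μ (Set.Ioi y) := by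
    apply setLIntegral_congr_fun measurableSet_Ioi
    intro y hy
    dsimp only
    rw [ENNReal.ofReal_mul (by nlinarith [Real.cos_le_one (c*y)]),
      ENNReal.ofReal_toReal (mu_Ioi_ne_top μ hμint hy)]
  rw [step1, swap_gen μ _ (by fun_prop)]
  apply lintegral_congr_ae
  filter_upwards [ae_pos μ hμ] with x hx
  exact eval_psi_inner c x hc hx

lemma tonelli_K (μ : Measure ℝ) [SigmaFinite μ] (hμ : μ (Set.Iic 0) = 0)
    (hμint : ∫⁻ s, ENNReal.ofReal (min 1 s) ∂μ < ⊤) (r : ℝ) (hr : 0 < r) :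
    ∫⁻ y in Set.Ioo (0:ℝ) r, ENNReal.ofReal (y ^ 2 * (μ (Set.Ioi y)).toReal)
      = ∫⁻ x, ENNReal.ofReal ((min x r) ^ 3 / 3) ∂μ := by
  have step1 : ∫⁻ y in Set.Ioo (0:ℝ) r, ENNReal.ofReal (y ^ 2 * (μ (Set.Ioi y)).toReal)
      = ∫⁻ y in Set.Ioo (0:ℝ) r, ENNReal.ofReal (y ^ 2) * μ (Set.Ioi y) := by
    apply setLIntegral_congr_fun measurableSet_Ioo
    intro y hy
    dsimp only
    rw [ENNReal.ofReal_mul (sq_nonneg y), ENNReal.ofReal_toReal (mu_Ioi_ne_top μ hμint hy.1)]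
  rw [step1, swap_gen μ _ (by fun_prop)]
  apply lintegral_congr_ae
  filter_upwards [ae_pos μ hμ] with x hx
  exact eval_K_inner r x hr hx

-- bound: x - sin(cx)/c ≤ (c^2/6) * x^3 for 0 < c, 0 ≤ x
lemma g_le_cube {c x : ℝ} (hc : 0 < c) (hx : 0 ≤ x) :
    x - Real.sin (c*x)/c ≤ c^2 * x^3 / 6 := by
  have h := sub_cube_le_sin (mul_nonneg hc.le hx)
  have h2 : x - c^2*x^3/6 ≤ Real.sin (c*x)/c := by
    rw [le_div_iff₀ hc]; nlinarith [h]
  linarith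

lemma g_nonneg {c x : ℝ} (hc : 0 < c) (hx : 0 ≤ x) : 0 ≤ x - Real.sin (c*x)/c := by
  have h := Real.sin_le (mul_nonneg hc.le hx)
  rw [sub_nonneg, div_le_iff₀ hc]
  linarith

-- finiteness propagation
lemma Afin_of_T (μ : Measure ℝ) [SigmaFinite μ] (hμ : μ (Set.Iic 0) = 0)
    (hμint : ∫⁻ s, ENNReal.ofReal (min 1 s) ∂μ < ⊤)
    (hT : ∫⁻ x in Set.Ioi (1:ℝ), ENNReal.ofReal x ∂μ < ⊤) (c : ℝ) (hc : 0 < c) :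
    ∫⁻ x, ENNReal.ofReal (x - Real.sin (c*x)/c) ∂μ < ⊤ := by
  set C : ℝ := c^2/6 + 1 + 1/c with hC
  have hC0 : 0 ≤ C := by positivity
  have hbound : ∀ᵐ x ∂μ, ENNReal.ofReal (x - Real.sin (c*x)/c)
      ≤ ENNReal.ofReal C * ENNReal.ofReal (min 1 x)
        + (Set.Ioi 1).indicator (fun x => ENNReal.ofReal C * ENNReal.ofReal x) x := by
    filter_upwards [ae_pos μ hμ] with x hx
    rcases le_or_gt x 1 with h1 | h1
    · have e1 : x - Real.sin (c*x)/c ≤ C * min 1 x := by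
        have hg := g_le_cube hc hx.le
        have hx3 : x^3 ≤ x := by
          nlinarith [mul_nonneg (mul_nonneg hx.le (sub_nonneg.2 h1)) (by linarith : (0:ℝ) ≤ 1 + x)]
        have e2 : c^2*x^3 ≤ c^2*x := mul_le_mul_of_nonneg_left hx3 (sq_nonneg c)
        have hmin : min 1 x = x := min_eq_right h1
        rw [hmin]
        have h7 : 0 ≤ (1 + 1/c) * x := by positivity
        have h8 : C * x = (c^2/6)*x + (1 + 1/c)*x := by ring
        linarith
      calc ENNReal.ofReal (x - Real.sin (c*x)/c) ≤ ENNReal.ofReal (C * min 1 x) :=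
            ENNReal.ofReal_le_ofReal e1
        _ = ENNReal.ofReal C * ENNReal.ofReal (min 1 x) := ENNReal.ofReal_mul hC0
        _ ≤ _ := le_add_of_nonneg_right (by positivity)
    · have e1 : x - Real.sin (c*x)/c ≤ C * x := by
        have h2 : Real.sin (c*x) ≥ -1 := Real.neg_one_le_sin (c*x)
        have h3 : -(Real.sin (c*x)/c) ≤ 1/c := by
          rw [neg_div', div_le_div_iff₀ hc hc]
          nlinarith [Real.neg_one_le_sin (c*x)]
        have : x - Real.sin (c*x)/c ≤ x + 1/c := by linarith
        have h4 : x + 1/c ≤ C * x := by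
          have h5 : 1/c ≤ (1/c) * x := le_mul_of_one_le_right (by positivity) h1.le
          have : C * x = (c^2/6)*x + x + (1/c)*x := by ring
          nlinarith [sq_nonneg c, hx.le]
        linarith
      have hmem : x ∈ Set.Ioi (1:ℝ) := h1
      rw [Set.indicator_of_mem hmem]
      calc ENNReal.ofReal (x - Real.sin (c*x)/c) ≤ ENNReal.ofReal (C * x) :=
            ENNReal.ofReal_le_ofReal e1
        _ = ENNReal.ofReal C * ENNReal.ofReal x := ENNReal.ofReal_mul hC0
        _ ≤ _ := le_add_of_nonneg_left (by positivity)
  calc ∫⁻ x, ENNReal.ofReal (x - Real.sin (c*x)/c) ∂μ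
      ≤ ∫⁻ x, (ENNReal.ofReal C * ENNReal.ofReal (min 1 x)
        + (Set.Ioi 1).indicator (fun x => ENNReal.ofReal C * ENNReal.ofReal x) x) ∂μ :=
        lintegral_mono_ae hbound
    _ = ENNReal.ofReal C * ∫⁻ x, ENNReal.ofReal (min 1 x) ∂μ
        + ENNReal.ofReal C * ∫⁻ x in Set.Ioi 1, ENNReal.ofReal x ∂μ := by
        rw [lintegral_add_left (by fun_prop), lintegral_const_mul' _ _ ENNReal.ofReal_ne_top,
          lintegral_indicator measurableSet_Ioi,
          lintegral_const_mul' _ _ ENNReal.ofReal_ne_top]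
    _ < ⊤ := by
        apply ENNReal.add_lt_top.2
        exact ⟨ENNReal.mul_lt_top ENNReal.ofReal_lt_top hμint,
          ENNReal.mul_lt_top ENNReal.ofReal_lt_top hT⟩

lemma T_of_Afin (μ : Measure ℝ) [SigmaFinite μ]
    (hμint : ∫⁻ s, ENNReal.ofReal (min 1 s) ∂μ < ⊤) (c : ℝ) (hc : 0 < c)
    (hA : ∫⁻ x, ENNReal.ofReal (x - Real.sin (c*x)/c) ∂μ < ⊤) :
    ∫⁻ x in Set.Ioi (1:ℝ), ENNReal.ofReal x ∂μ < ⊤ := by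
  set M : ℝ := max 1 (2/c) with hM
  have hM1 : (1:ℝ) ≤ M := le_max_left _ _
  have hMc : 2/c ≤ M := le_max_right _ _
  rw [← Set.Ioc_union_Ioi_eq_Ioi hM1, lintegral_union measurableSet_Ioi
    (Set.Ioc_disjoint_Ioi le_rfl)]
  apply ENNReal.add_lt_top.2
  constructor
  · calc ∫⁻ x in Set.Ioc 1 M, ENNReal.ofReal x ∂μ
        ≤ ∫⁻ _ in Set.Ioc 1 M, ENNReal.ofReal M ∂μ := by
          apply setLIntegral_mono measurable_const
          intro x hx
          exact ENNReal.ofReal_le_ofReal hx.2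
      _ = ENNReal.ofReal M * μ (Set.Ioc 1 M) := setLIntegral_const _ _
      _ ≤ ENNReal.ofReal M * μ (Set.Ioi 1) := by
          apply mul_le_mul_right (measure_mono Set.Ioc_subset_Ioi_self)
      _ < ⊤ := ENNReal.mul_lt_top ENNReal.ofReal_lt_top
          (lt_top_iff_ne_top.2 (mu_Ioi_ne_top μ hμint one_pos))
  · calc ∫⁻ x in Set.Ioi M, ENNReal.ofReal x ∂μ
        ≤ ∫⁻ x in Set.Ioi M, 2 * ENNReal.ofReal (x - Real.sin (c*x)/c) ∂μ := by
          apply setLIntegral_mono (by fun_prop)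
          intro x hx
          have hxM : M < x := hx
          have h2c : 2/c ≤ x := le_of_lt (lt_of_le_of_lt hMc hxM)
          have hsin : Real.sin (c*x)/c ≤ 1/c := by
            gcongr
            exact Real.sin_le_one _
          have h5 : x ≤ 2 * (x - Real.sin (c*x)/c) := by
            have h6 : (2:ℝ) ≤ x*c := (div_le_iff₀ hc).mp h2c
            have h7 : 1/c ≤ x/2 := by rw [div_le_div_iff₀ hc two_pos]; linarith
            linarith
          calc ENNReal.ofReal x ≤ ENNReal.ofReal (2 * (x - Real.sin (c*x)/c)) :=
              ENNReal.ofReal_le_ofReal h5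
            _ = 2 * ENNReal.ofReal (x - Real.sin (c*x)/c) := by
              rw [ENNReal.ofReal_mul (by norm_num)]; norm_num
      _ = 2 * ∫⁻ x in Set.Ioi M, ENNReal.ofReal (x - Real.sin (c*x)/c) ∂μ :=
          lintegral_const_mul' _ _ (by norm_num)
      _ ≤ 2 * ∫⁻ x, ENNReal.ofReal (x - Real.sin (c*x)/c) ∂μ := by
          apply mul_le_mul_right (setLIntegral_le_lintegral _ _)
      _ < ⊤ := ENNReal.mul_lt_top (by norm_num) hA

theorem stmt_5 (μ : Measure ℝ) [SigmaFinite μ] (hμ : μ (Set.Iic 0) = 0)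
    (hμint : ∫⁻ s, ENNReal.ofReal (min 1 s) ∂μ < ⊤)
    (ν₁ : ℝ → ℝ) (hν₁ : ∀ y, ν₁ y = (μ (Set.Ioi y)).toReal)
    (ψ : ℝ → ℝ)
    (hψ : ∀ u : ℝ, ψ u = ∫ y in Set.Ioi (0:ℝ), (1 - Real.cos (u * y)) * ν₁ y)
    (K₁ : ℝ → ℝ)
    (hK₁ : ∀ r : ℝ, K₁ r = 2 * r⁻¹ ^ 2 * ∫ y in Set.Ioo 0 r, y ^ 2 * ν₁ y) :
    ∀ u : ℝ, 0 < u → ∀ l : ℝ, l ∈ Set.Icc (1:ℝ) 2 →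
      |ψ (l * u) - ψ u| ≤ 3 * K₁ (1 / u) := by
  intro u hu l hl
  obtain ⟨hl1, hl2⟩ := hl
  have hl0 : 0 < l := lt_of_lt_of_le one_pos hl1
  have hlu : 0 < l * u := mul_pos hl0 hu
  have hν_meas : Measurable ν₁ := by
    have hm : Measurable fun y : ℝ => μ (Set.Ioi y) :=
      Antitone.measurable (fun a b hab => measure_mono (Set.Ioi_subset_Ioi hab))
    have hfe : ν₁ = fun y => (μ (Set.Ioi y)).toReal := funext hν₁
    rw [hfe]; exact hm.ennreal_toReal
  have hψeq : ∀ c : ℝ, 0 < c →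
      ψ c = (∫⁻ x, ENNReal.ofReal (x - Real.sin (c*x)/c) ∂μ).toReal := by
    intro c hc
    rw [hψ c, integral_eq_lintegral_of_nonneg_ae]
    · congr 1
      have h1 : ∫⁻ y in Set.Ioi (0:ℝ), ENNReal.ofReal ((1 - Real.cos (c*y)) * ν₁ y)
          = ∫⁻ y in Set.Ioi (0:ℝ),
            ENNReal.ofReal ((1 - Real.cos (c*y)) * (μ (Set.Ioi y)).toReal) :=
        lintegral_congr fun y => by rw [hν₁]
      rw [h1, tonelli_psi μ hμ hμint c hc]
    · exact Filter.Eventually.of_forall fun y =>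
        mul_nonneg (by nlinarith [Real.cos_le_one (c*y)]) (hν₁ y ▸ ENNReal.toReal_nonneg)
    · exact (((continuous_const.sub
        (Real.continuous_cos.comp (continuous_const.mul continuous_id))).measurable).mul
        hν_meas).aestronglyMeasurable
  set r : ℝ := 1/u with hr
  have hr0 : 0 < r := by positivity
  set B : ℝ≥0∞ := ∫⁻ x, ENNReal.ofReal ((min x r)^3/3) ∂μ with hB
  have hKeq : K₁ r = 2 * u^2 * B.toReal := by
    rw [hK₁ r]
    have hru : r⁻¹ = u := by rw [hr, one_div, inv_inv]
    rw [hru]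
    congr 1
    rw [integral_eq_lintegral_of_nonneg_ae]
    · congr 1
      have h1 : ∫⁻ y in Set.Ioo (0:ℝ) r, ENNReal.ofReal (y^2 * ν₁ y)
          = ∫⁻ y in Set.Ioo (0:ℝ) r, ENNReal.ofReal (y^2 * (μ (Set.Ioi y)).toReal) :=
        lintegral_congr fun y => by rw [hν₁]
      rw [h1, tonelli_K μ hμ hμint r hr0]
    · exact Filter.Eventually.of_forall fun y =>
        mul_nonneg (sq_nonneg y) (hν₁ y ▸ ENNReal.toReal_nonneg)
    · exact ((continuous_pow 2).measurable.mul hν_meas).aestronglyMeasurable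
  have hBfin : B < ⊤ := by
    set C : ℝ := r^2 * max 1 r with hC
    have hC0 : 0 ≤ C := by positivity
    have hb : ∀ᵐ x ∂μ, ENNReal.ofReal ((min x r)^3/3)
        ≤ ENNReal.ofReal C * ENNReal.ofReal (min 1 x) := by
      filter_upwards [ae_pos μ hμ] with x hx
      rw [← ENNReal.ofReal_mul hC0]
      apply ENNReal.ofReal_le_ofReal
      have h1 : 0 ≤ min x r := le_min hx.le hr0.le
      have h2 : min x r ≤ r := min_le_right _ _
      have h3 : min x r ≤ max 1 r * min 1 x := by
        rcases le_total x 1 with h | h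
        · rw [min_eq_right h]
          calc min x r ≤ x := min_le_left _ _
            _ ≤ max 1 r * x := le_mul_of_one_le_left hx.le (le_max_left _ _)
        · rw [min_eq_left h, mul_one]
          exact le_trans (min_le_right _ _) (le_max_right _ _)
      calc (min x r)^3/3 ≤ (min x r)^3 := by nlinarith [pow_nonneg h1 3]
        _ = (min x r)^2 * min x r := by ring
        _ ≤ r^2 * (max 1 r * min 1 x) :=
          mul_le_mul (pow_le_pow_left₀ h1 h2 2) h3 h1 (by positivity)
        _ = C * min 1 x := by rw [hC]; ring
    calc B ≤ ∫⁻ x, ENNReal.ofReal C * ENNReal.ofReal (min 1 x) ∂μ := lintegral_mono_ae hb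
      _ = ENNReal.ofReal C * ∫⁻ x, ENNReal.ofReal (min 1 x) ∂μ :=
        lintegral_const_mul' _ _ ENNReal.ofReal_ne_top
      _ < ⊤ := ENNReal.mul_lt_top ENNReal.ofReal_lt_top hμint
  by_cases hT : (∫⁻ x in Set.Ioi (1:ℝ), ENNReal.ofReal x ∂μ) < ⊤
  · -- finite case
    have hAu := Afin_of_T μ hμ hμint hT u hu
    have hAlu := Afin_of_T μ hμ hμint hT (l*u) hlu
    have hgnn : ∀ c : ℝ, 0 < c → ∀ᵐ x ∂μ, 0 ≤ x - Real.sin (c*x)/c := by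
      intro c hc
      filter_upwards [ae_pos μ hμ] with x hx
      exact g_nonneg hc hx.le
    have hgm : ∀ c : ℝ, AEStronglyMeasurable (fun x => x - Real.sin (c*x)/c) μ := fun c =>
      ((by fun_prop : Continuous fun x : ℝ => x - Real.sin (c*x)/c)).measurable.aestronglyMeasurable
    have hInt : ∀ c : ℝ, 0 < c → (∫⁻ x, ENNReal.ofReal (x - Real.sin (c*x)/c) ∂μ) < ⊤ →
        Integrable (fun x => x - Real.sin (c*x)/c) μ := by
      intro c hc hA
      refine ⟨hgm c, ?_⟩
      rw [hasFiniteIntegral_iff_norm]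
      have heq : ∫⁻ x, ENNReal.ofReal ‖x - Real.sin (c*x)/c‖ ∂μ
          = ∫⁻ x, ENNReal.ofReal (x - Real.sin (c*x)/c) ∂μ := by
        apply lintegral_congr_ae
        filter_upwards [hgnn c hc] with x hx
        rw [Real.norm_eq_abs, abs_of_nonneg hx]
      rw [heq]; exact hA
    have hIu := hInt u hu hAu
    have hIlu := hInt (l*u) hlu hAlu
    have hint_eq : ∀ c : ℝ, 0 < c → ∫ x, (x - Real.sin (c*x)/c) ∂μ
        = (∫⁻ x, ENNReal.ofReal (x - Real.sin (c*x)/c) ∂μ).toReal := fun c hc =>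
      integral_eq_lintegral_of_nonneg_ae (hgnn c hc) (hgm c)
    have hdiff : ψ (l*u) - ψ u
        = ∫ x, ((x - Real.sin (l*u*x)/(l*u)) - (x - Real.sin (u*x)/u)) ∂μ := by
      rw [hψeq (l*u) hlu, hψeq u hu, ← hint_eq (l*u) hlu, ← hint_eq u hu,
        ← integral_sub hIlu hIu]
    set b : ℝ → ℝ := fun x => 2 * u⁻¹ * min 1 ((u*x)^3) with hbdef
    have hbm : AEStronglyMeasurable b μ :=
      ((by fun_prop : Continuous b)).measurable.aestronglyMeasurable
    have hhb : ∀ᵐ x ∂μ, |(x - Real.sin (l*u*x)/(l*u)) - (x - Real.sin (u*x)/u)| ≤ b x := by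
      filter_upwards [ae_pos μ hμ] with x hx
      have ht : 0 ≤ u*x := (mul_pos hu hx).le
      have key := key_sin_bound (t := u*x) ht hl1 hl2
      have heq : (x - Real.sin (l*u*x)/(l*u)) - (x - Real.sin (u*x)/u)
          = u⁻¹ * (Real.sin (u*x) - l⁻¹ * Real.sin (l*(u*x))) := by
        rw [show l*(u*x) = l*u*x by ring]
        field_simp
        ring
      rw [heq, abs_mul, abs_of_pos (inv_pos.2 hu)]
      calc u⁻¹ * |Real.sin (u*x) - l⁻¹ * Real.sin (l*(u*x))|
          ≤ u⁻¹ * (2 * min 1 ((u*x)^3)) :=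
            mul_le_mul_of_nonneg_left key (inv_pos.2 hu).le
        _ = b x := by rw [hbdef]; ring
    have hbB : ∀ᵐ x ∂μ, b x = 6*u^2 * ((min x r)^3/3) := by
      filter_upwards [ae_pos μ hμ] with x hx
      have ht : 0 ≤ u*x := (mul_pos hu hx).le
      have hcase : min 1 ((u*x)^3) = u^3 * (min x r)^3 := by
        rcases le_total x r with h | h
        · have h1 : u*x ≤ 1 := by
            rw [hr] at h
            calc u*x ≤ u*(1/u) := by nlinarith
              _ = 1 := by field_simp
          have h2 : (u*x)^3 ≤ 1 := pow_le_one₀ ht h1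
          rw [min_eq_right h2, min_eq_left h, mul_pow]
        · have h1 : 1 ≤ u*x := by
            rw [hr] at h
            have : u*(1/u) ≤ u*x := by nlinarith
            calc (1:ℝ) = u*(1/u) := by field_simp
              _ ≤ u*x := this
          have h2 : 1 ≤ (u*x)^3 := one_le_pow₀ h1
          rw [min_eq_left h2, min_eq_right h, hr]
          field_simp
      rw [hbdef]
      simp only []
      rw [hcase]
      field_simp
      ring
    have hmin_nonneg : ∀ x : ℝ, 0 < x → 0 ≤ (min x r)^3/3 := fun x hx =>
      div_nonneg (pow_nonneg (le_min hx.le hr0.le) 3) (by norm_num)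
    have hbfin : HasFiniteIntegral b μ := by
      rw [hasFiniteIntegral_iff_norm]
      have heq : ∫⁻ x, ENNReal.ofReal ‖b x‖ ∂μ
          = ∫⁻ x, ENNReal.ofReal (6*u^2) * ENNReal.ofReal ((min x r)^3/3) ∂μ := by
        apply lintegral_congr_ae
        filter_upwards [hbB, ae_pos μ hμ] with x hbx hx
        rw [Real.norm_eq_abs, hbx,
          abs_of_nonneg (mul_nonneg (by positivity) (hmin_nonneg x hx)),
          ENNReal.ofReal_mul (by positivity)]
      rw [heq, lintegral_const_mul' _ _ ENNReal.ofReal_ne_top]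
      exact ENNReal.mul_lt_top ENNReal.ofReal_lt_top hBfin
    have hIb : Integrable b μ := ⟨hbm, hbfin⟩
    have hbint : ∫ x, b x ∂μ = 3 * K₁ r := by
      rw [hKeq]
      have h1 : ∫ x, b x ∂μ = (∫⁻ x, ENNReal.ofReal (b x) ∂μ).toReal :=
        integral_eq_lintegral_of_nonneg_ae (by
          filter_upwards [hbB, ae_pos μ hμ] with x hbx hx
          rw [hbx]
          exact mul_nonneg (by positivity) (hmin_nonneg x hx)) hbm
      have h2 : ∫⁻ x, ENNReal.ofReal (b x) ∂μ = ENNReal.ofReal (6*u^2) * B := by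
        rw [hB, ← lintegral_const_mul' _ _ ENNReal.ofReal_ne_top]
        apply lintegral_congr_ae
        filter_upwards [hbB, ae_pos μ hμ] with x hbx hx
        rw [hbx, ENNReal.ofReal_mul (by positivity)]
      rw [h1, h2, ENNReal.toReal_mul, ENNReal.toReal_ofReal (by positivity)]
      ring
    rw [hdiff]
    have habs : |∫ x, ((x - Real.sin (l*u*x)/(l*u)) - (x - Real.sin (u*x)/u)) ∂μ|
        ≤ ∫ x, |(x - Real.sin (l*u*x)/(l*u)) - (x - Real.sin (u*x)/u)| ∂μ := by
      simpa [Real.norm_eq_abs] using norm_integral_le_integral_norm (μ := μ)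
        (fun x => (x - Real.sin (l*u*x)/(l*u)) - (x - Real.sin (u*x)/u))
    exact habs.trans (le_trans (integral_mono_ae (hIlu.sub hIu).abs hIb hhb)
      (le_of_eq hbint))
  · have hAu : (∫⁻ x, ENNReal.ofReal (x - Real.sin (u*x)/u) ∂μ) = ⊤ := by
      by_contra h
      exact hT (T_of_Afin μ hμint u hu (lt_top_iff_ne_top.2 h))
    have hAlu : (∫⁻ x, ENNReal.ofReal (x - Real.sin (l*u*x)/(l*u)) ∂μ) = ⊤ := by
      by_contra h
      exact hT (T_of_Afin μ hμint (l*u) hlu (lt_top_iff_ne_top.2 h))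
    rw [hψeq (l*u) hlu, hψeq u hu, hAu, hAlu]
    have hK0 : 0 ≤ K₁ r := by
      rw [hK₁ r]
      apply mul_nonneg (by positivity)
      apply integral_nonneg
      intro y
      exact mul_nonneg (sq_nonneg y) (hν₁ y ▸ ENNReal.toReal_nonneg)
    simp only [ENNReal.toReal_top, sub_zero, abs_zero]
    linarith
end

section
/- Suppose φ : (0,∞) → (0,∞) is non-increasing-derivative (φ' non-increasing, φ increasing) and φ' satisfies the weak lower scaling condition: φ'(λu) ≥ c λ^{−β} φ'(u) for all λ ≥ 1, u > θ, with β ∈ [0, d/2+1) and c ∈ (0,1]. Then there is a constant C > 0 (depending on θ, β, d, c, φ) such that for all r ≤ θ^{−1/2}: ∫₀^{r^{−2}} u^{d/2} φ'(u) du ≤ C r^{−d−2} φ'(r^{−2}). -/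
/-!
Split the integral at `θ`. On `(θ, R]` the scaling condition gives
`φ'(u) ≤ c⁻¹ (R/u)^β φ'(R)`, so that part is at most
`c⁻¹ R^β φ'(R) ∫ u^(d/2-β) du ≤ c⁻¹ (d/2-β+1)⁻¹ R^(d/2+1) φ'(R)`, using `β < d/2+1`.
The integral over `[0, θ]` is a fixed number, and `φ'(2θ) ≤ c⁻¹ (R/θ)^(d/2+1) φ'(R)`
shows that it is also `O(R^(d/2+1) φ'(R))`. Finally `R = r⁻²`.
-/

open MeasureTheory Set Real

def WeakLowerScaling (f : ℝ → ℝ) (β θ c : ℝ) : Prop :=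
  ∀ l u : ℝ, 1 ≤ l → θ < u → c * l ^ (-β) * f u ≤ f (l * u)

namespace WeakLowerScaling

variable {f : ℝ → ℝ} {β θ c : ℝ}

theorem le_mul_rpow_mul (h : WeakLowerScaling f β θ c) (hθ : 0 ≤ θ) (hc : 0 < c)
    {u v : ℝ} (hu : θ < u) (huv : u ≤ v) : f u ≤ c⁻¹ * (v / u) ^ β * f v := by
  have hu0 : 0 < u := hθ.trans_lt hu
  have hvu : 0 < v / u := div_pos (hu0.trans_le huv) hu0
  have key := h (v / u) u ((one_le_div hu0).2 huv) hu
  rw [div_mul_cancel₀ _ hu0.ne', rpow_neg hvu.le] at key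
  have hpow : 0 < (v / u) ^ β := rpow_pos_of_pos hvu β
  calc f u = c⁻¹ * (v / u) ^ β * (c * ((v / u) ^ β)⁻¹ * f u) := by field_simp
    _ ≤ c⁻¹ * (v / u) ^ β * f v := by gcongr

theorem intervalIntegral_rpow_mul_le (h : WeakLowerScaling f β θ c) (hθ : 0 < θ) (hc : 0 < c)
    {a R : ℝ} (hβa : β < a + 1) (hR : θ ≤ R) (hfR : 0 ≤ f R)
    (hint : IntervalIntegrable (fun u => u ^ a * f u) volume θ R) :
    ∫ u in θ..R, u ^ a * f u ≤ c⁻¹ * (a - β + 1)⁻¹ * R ^ (a + 1) * f R := by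
  have hR0 : 0 < R := hθ.trans_le hR
  have hp : 0 < a - β + 1 := by linarith
  have hpointwise : ∀ u ∈ Ioo θ R, u ^ a * f u ≤ c⁻¹ * R ^ β * f R * u ^ (a - β) := by
    intro u ⟨hθu, huR⟩
    have hu0 : 0 < u := hθ.trans hθu
    calc u ^ a * f u ≤ u ^ a * (c⁻¹ * (R / u) ^ β * f R) := by
          gcongr; exact h.le_mul_rpow_mul hθ.le hc hθu huR.le
      _ = c⁻¹ * R ^ β * f R * u ^ (a - β) := by
          rw [div_rpow hR0.le hu0.le, rpow_sub hu0]
          field_simp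
  have hcont : IntervalIntegrable (fun u => c⁻¹ * R ^ β * f R * u ^ (a - β)) volume θ R := by
    refine (ContinuousOn.rpow_const continuousOn_id fun u hu => ?_).intervalIntegrable.const_mul _
    rw [uIcc_of_le hR] at hu
    exact Or.inl (hθ.trans_le hu.1).ne'
  calc ∫ u in θ..R, u ^ a * f u
      ≤ ∫ u in θ..R, c⁻¹ * R ^ β * f R * u ^ (a - β) :=
        intervalIntegral.integral_mono_on_of_le_Ioo hR hint hcont hpointwise
    _ = c⁻¹ * R ^ β * f R * ((R ^ (a - β + 1) - θ ^ (a - β + 1)) / (a - β + 1)) := by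
        rw [intervalIntegral.integral_const_mul, integral_rpow (Or.inl (by linarith))]
    _ ≤ c⁻¹ * R ^ β * f R * (R ^ (a - β + 1) / (a - β + 1)) := by
        gcongr
        exact sub_le_self _ (rpow_nonneg hθ.le _)
    _ = c⁻¹ * (a - β + 1)⁻¹ * R ^ (a + 1) * f R := by
        have hsplit : R ^ (a + 1) = R ^ β * R ^ (a - β + 1) := by
          rw [← rpow_add hR0]; ring_nf
        rw [hsplit]
        ring

-- `2θ` serves as a fixed reference point strictly above `θ`, where the scaling condition applies.
theorem apply_two_mul_le (h : WeakLowerScaling f β θ c) (hθ : 0 < θ) (hc : 0 < c) (hc1 : c ≤ 1)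
    (hanti : AntitoneOn f (Ioi 0)) {γ R : ℝ} (hγ : 0 ≤ γ) (hβγ : β ≤ γ) (hR : θ ≤ R)
    (hfR : 0 ≤ f R) : f (2 * θ) ≤ c⁻¹ * (R / θ) ^ γ * f R := by
  have hR0 : 0 < R := hθ.trans_le hR
  have hRθ : 1 ≤ R / θ := (one_le_div hθ).2 hR
  rcases le_or_gt (2 * θ) R with h2R | hR2
  · have hR2θ : 1 ≤ R / (2 * θ) := (one_le_div (by positivity)).2 h2R
    calc f (2 * θ) ≤ c⁻¹ * (R / (2 * θ)) ^ β * f R :=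
          h.le_mul_rpow_mul hθ.le hc (by linarith) h2R
      _ ≤ c⁻¹ * (R / (2 * θ)) ^ γ * f R := by
          gcongr
      _ ≤ c⁻¹ * (R / θ) ^ γ * f R := by
          gcongr; linarith
  · calc f (2 * θ) ≤ f R := hanti (mem_Ioi.2 hR0) (mem_Ioi.2 (by linarith)) hR2.le
      _ = 1 * 1 * f R := by ring
      _ ≤ c⁻¹ * (R / θ) ^ γ * f R := by
          gcongr
          · exact (one_le_inv₀ hc).2 hc1
          · exact one_le_rpow hRθ hγ

theorem exists_intervalIntegral_rpow_mul_le (h : WeakLowerScaling f β θ c) (hθ : 0 < θ)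
    (hc : 0 < c) (hc1 : c ≤ 1) (hpos : ∀ u, 0 < u → 0 < f u) (hanti : AntitoneOn f (Ioi 0))
    {a : ℝ} (ha : 0 ≤ a + 1) (hβa : β < a + 1) :
    ∃ C > 0, ∀ R, θ ≤ R → ∫ u in (0 : ℝ)..R, u ^ a * f u ≤ C * R ^ (a + 1) * f R := by
  have hA : 0 ≤ ∫ u in (0 : ℝ)..θ, u ^ a * f u := by
    rw [intervalIntegral.integral_of_le hθ.le]
    exact setIntegral_nonneg measurableSet_Ioc fun u hu =>
      mul_nonneg (rpow_nonneg hu.1.le _) (hpos u hu.1).le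
  have hf2θ := hpos (2 * θ) (by positivity)
  set K := (∫ u in (0 : ℝ)..θ, u ^ a * f u) / f (2 * θ) * c⁻¹ * θ ^ (-(a + 1)) with hK_def
  have hK : 0 ≤ K := by positivity
  have hβa' : 0 < a - β + 1 := by linarith
  refine ⟨K + c⁻¹ * (a - β + 1)⁻¹, by positivity, fun R hR => ?_⟩
  have hR0 : 0 < R := hθ.trans_le hR
  have hfR := hpos R hR0
  by_cases hint : IntervalIntegrable (fun u => u ^ a * f u) volume 0 R
  swap
  · rw [intervalIntegral.integral_undef hint]
    positivity
  have hsub : ∀ {x y : ℝ}, 0 ≤ x → x ≤ y → y ≤ R →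
      IntervalIntegrable (fun u => u ^ a * f u) volume x y := fun hx hxy hyR =>
    hint.mono_set <| by
      rw [uIcc_of_le hxy, uIcc_of_le hR0.le]; exact Icc_subset_Icc hx hyR
  have hfirst : ∫ u in (0 : ℝ)..θ, u ^ a * f u ≤ K * R ^ (a + 1) * f R :=
    calc ∫ u in (0 : ℝ)..θ, u ^ a * f u
        = (∫ u in (0 : ℝ)..θ, u ^ a * f u) / f (2 * θ) * f (2 * θ) :=
          (div_mul_cancel₀ _ hf2θ.ne').symm
      _ ≤ (∫ u in (0 : ℝ)..θ, u ^ a * f u) / f (2 * θ) * (c⁻¹ * (R / θ) ^ (a + 1) * f R) := by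
          gcongr; exact h.apply_two_mul_le hθ hc hc1 hanti ha hβa.le hR hfR.le
      _ = K * R ^ (a + 1) * f R := by
          rw [div_rpow hR0.le hθ.le, hK_def, rpow_neg hθ.le]; ring
  have hsecond := h.intervalIntegral_rpow_mul_le hθ hc hβa hR hfR.le (hsub hθ.le hR le_rfl)
  rw [← intervalIntegral.integral_add_adjacent_intervals (hsub le_rfl hθ.le hR)
    (hsub hθ.le hR le_rfl)]
  linarith

end WeakLowerScaling

theorem le_inv_sq_of_le_rpow_neg_half {θ r : ℝ} (hθ : 0 < θ) (hr : 0 < r)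
    (h : r ≤ θ ^ (-(1 : ℝ) / 2)) : θ ≤ (r ^ 2)⁻¹ := by
  have hsq : (θ ^ (-(1 : ℝ) / 2)) ^ 2 = θ⁻¹ := by
    rw [← rpow_natCast, ← rpow_mul hθ.le]; norm_num [rpow_neg_one]
  have hr2 : r ^ 2 ≤ θ⁻¹ := hsq ▸ pow_le_pow_left₀ hr.le h 2
  simpa using inv_anti₀ (pow_pos hr 2) hr2

theorem stmt_12_general (d : ℕ) (φ : ℝ → ℝ) (θ β c : ℝ)
    (hθ : 0 < θ) (hβ' : β < (d : ℝ) / 2 + 1)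
    (hc : 0 < c) (hc' : c ≤ 1)
    (hφ'pos : ∀ u : ℝ, 0 < u → 0 < deriv φ u)
    (hφ'mono : ∀ u v : ℝ, 0 < u → u ≤ v → deriv φ v ≤ deriv φ u)
    (hwlsc : ∀ l u : ℝ, 1 ≤ l → θ < u →
        c * l ^ (-β) * deriv φ u ≤ deriv φ (l * u)) :
    ∃ C > (0:ℝ), ∀ r : ℝ, 0 < r → r ≤ θ ^ (-(1:ℝ)/2) →
      (∫ u in (0:ℝ)..(r ^ 2)⁻¹, u ^ ((d : ℝ) / 2) * deriv φ u) ≤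
        C * r ^ (-(d : ℝ) - 2) * deriv φ ((r ^ 2)⁻¹) := by
  have hanti : AntitoneOn (deriv φ) (Ioi 0) := fun u hu _ _ huv => hφ'mono u _ hu huv
  obtain ⟨C, hC, hbound⟩ := WeakLowerScaling.exists_intervalIntegral_rpow_mul_le hwlsc hθ hc hc'
    hφ'pos hanti (a := (d : ℝ) / 2) (by positivity) hβ'
  refine ⟨C, hC, fun r hr hrθ => ?_⟩
  have hpow : ((r ^ 2)⁻¹) ^ ((d : ℝ) / 2 + 1) = r ^ (-(d : ℝ) - 2) := by
    rw [← rpow_natCast, ← rpow_neg_one, ← rpow_mul hr.le, ← rpow_mul hr.le]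
    congr 1; push_cast; ring
  rw [← hpow]
  exact hbound _ (le_inv_sq_of_le_rpow_neg_half hθ hr hrθ)

theorem stmt_12 (d : ℕ) (hd : 1 ≤ d) (φ : ℝ → ℝ) (θ β c : ℝ)
    (hθ : 0 < θ) (hβ : 0 ≤ β) (hβ' : β < (d : ℝ) / 2 + 1)
    (hc : 0 < c) (hc' : c ≤ 1)
    (hmono : ∀ u v : ℝ, 0 < u → u ≤ v → φ u ≤ φ v)
    (hφ'pos : ∀ u : ℝ, 0 < u → 0 < deriv φ u)
    (hφ'mono : ∀ u v : ℝ, 0 < u → u ≤ v → deriv φ v ≤ deriv φ u)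
    (hwlsc : ∀ l u : ℝ, 1 ≤ l → θ < u →
        c * l ^ (-β) * deriv φ u ≤ deriv φ (l * u)) :
    ∃ C > (0:ℝ), ∀ r : ℝ, 0 < r → r ≤ θ ^ (-(1:ℝ)/2) →
      (∫ u in (0:ℝ)..(r ^ 2)⁻¹, u ^ ((d : ℝ) / 2) * deriv φ u) ≤
        C * r ^ (-(d : ℝ) - 2) * deriv φ ((r ^ 2)⁻¹) :=
  stmt_12_general d φ θ β c hθ hβ' hc hc' hφ'pos hφ'mono hwlsc
end

section
/- Let h : (0,∞) → (0,∞) be non-increasing with r ↦ r² h(r) non-decreasing, and K : (0,∞) → [0,∞) with r ↦ r² K(r) non-decreasing and h'(r) = −2 K(r)/r. Suppose there is λ ∈ (0,1) such that h(λ r) ≥ 2 h(r) for all r in (0, R). Then for all r ∈ (0,R): h(r) ≤ (λ^{−2} − 1) K(r). -/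
/-! Both `h` and `r ↦ r² h r` are monotone, which makes `h` Lipschitz on compact subintervals
of `(0, ∞)`, hence absolutely continuous. So `h (λr) - h r = ∫_{λr}^r 2 K(s)/s ds` holds with
Mathlib's `deriv` even where `h` is not differentiable, and monotonicity of `s² K s` bounds the
integrand by `2 r² K r / s³`, whose integral is `(λ⁻² - 1) K r`. -/

open Set MeasureTheory intervalIntegral
open scoped Interval

lemma sub_le_of_antitoneOn_of_monotoneOn_sq_mul {h : ℝ → ℝ} {a b x y : ℝ} (ha : 0 < a)
    (hha : 0 ≤ h a) (hanti : AntitoneOn h (Icc a b))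
    (hmono : MonotoneOn (fun r => r ^ 2 * h r) (Icc a b))
    (hx : x ∈ Icc a b) (hy : y ∈ Icc a b) (hxy : x ≤ y) :
    h x - h y ≤ 2 * h a / a * (y - x) := by
  have hhx : h x ≤ h a := hanti ⟨le_rfl, hx.1.trans hx.2⟩ hx hx.1
  have hhy : h y ≤ h x := hanti hx hy hxy
  have hsq : x ^ 2 * h x ≤ y ^ 2 * h y := hmono hx hy hxy
  have hy0 : 0 < y := ha.trans_le hy.1
  have key : y * (h x - h y) ≤ 2 * h a * (y - x) := by
    have hsq_le : x ^ 2 ≤ y ^ 2 := pow_le_pow_left₀ (ha.le.trans hx.1) hxy 2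
    nlinarith [mul_le_mul_of_nonneg_left hhx (sub_nonneg.2 hsq_le),
      mul_nonneg (sub_nonneg.2 hxy) hha]
  rw [div_mul_eq_mul_div, le_div_iff₀ ha]
  nlinarith [mul_le_mul_of_nonneg_right hy.1 (sub_nonneg.2 hhy)]

lemma lipschitzOnWith_of_antitoneOn_of_monotoneOn_sq_mul {h : ℝ → ℝ} {a b : ℝ} (ha : 0 < a)
    (hha : 0 ≤ h a) (hanti : AntitoneOn h (Icc a b))
    (hmono : MonotoneOn (fun r => r ^ 2 * h r) (Icc a b)) :
    LipschitzOnWith (Real.toNNReal (2 * h a / a)) h (Icc a b) := by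
  refine LipschitzOnWith.of_le_add_mul' _ fun x hx y hy => ?_
  have hK : 0 ≤ 2 * h a / a := by positivity
  rcases le_total x y with hxy | hyx
  · rw [Real.dist_eq, abs_sub_comm, abs_of_nonneg (sub_nonneg.2 hxy)]
    linarith [sub_le_of_antitoneOn_of_monotoneOn_sq_mul ha hha hanti hmono hx hy hxy]
  · linarith [hanti hy hx hyx, mul_nonneg hK (dist_nonneg (x := x) (y := y))]

lemma integral_inv_pow_three {a b : ℝ} (ha : 0 < a) (hab : a ≤ b) :
    ∫ x in a..b, (x ^ 3)⁻¹ = ((a ^ 2)⁻¹ - (b ^ 2)⁻¹) / 2 := by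
  have h0 : (0 : ℝ) ∉ [[a, b]] := by
    rw [uIcc_of_le hab]; exact fun h => ha.not_ge h.1
  have := integral_zpow (a := a) (b := b) (n := -3) (Or.inr ⟨by norm_num, h0⟩)
  simp only [zpow_neg] at this
  norm_num at this
  rw [this]
  ring

theorem stmt_18_general (h K : ℝ → ℝ) (R l : ℝ)
    (hl : 0 < l) (hl' : l < 1)
    (hpos : ∀ r : ℝ, 0 < r → 0 < h r)
    (hanti : ∀ r s : ℝ, 0 < r → r ≤ s → h s ≤ h r)
    (hr2h : ∀ r s : ℝ, 0 < r → r ≤ s → r ^ 2 * h r ≤ s ^ 2 * h s)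
    (hr2K : ∀ r s : ℝ, 0 < r → r ≤ s → r ^ 2 * K r ≤ s ^ 2 * K s)
    (hderiv : ∀ r : ℝ, 0 < r → deriv h r = -2 * K r / r)
    (hdouble : ∀ r : ℝ, 0 < r → r < R → 2 * h r ≤ h (l * r)) :
    ∀ r : ℝ, 0 < r → r < R → h r ≤ ((l ^ 2)⁻¹ - 1) * K r := by
  intro r hr hrR
  have hlr : 0 < l * r := mul_pos hl hr
  have hlr_le : l * r ≤ r := by nlinarith
  have hlip := lipschitzOnWith_of_antitoneOn_of_monotoneOn_sq_mul (b := r) hlr (hpos _ hlr).le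
    (fun x hx y _ hxy => hanti x y (hlr.trans_le hx.1) hxy)
    (fun x hx y _ hxy => hr2h x y (hlr.trans_le hx.1) hxy)
  rw [← uIcc_of_le hlr_le] at hlip
  have hac : AbsolutelyContinuousOnInterval h (l * r) r := hlip.absolutelyContinuousOnInterval
  have hdecay : ∀ x ∈ Icc (l * r) r, -deriv h x ≤ 2 * (r ^ 2 * K r) * (x ^ 3)⁻¹ := by
    rintro x ⟨hx, hxr⟩
    have hx0 : 0 < x := hlr.trans_le hx
    rw [hderiv x hx0, neg_mul, neg_div, neg_neg, ← div_eq_mul_inv,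
      div_le_div_iff₀ hx0 (by positivity)]
    nlinarith [hr2K x r hx0 hxr]
  have hcont : ContinuousOn (fun x : ℝ => 2 * (r ^ 2 * K r) * (x ^ 3)⁻¹) [[l * r, r]] :=
    continuousOn_const.mul <| (continuousOn_pow 3).inv₀ fun x hx => by
      rw [uIcc_of_le hlr_le] at hx
      exact pow_ne_zero 3 (hlr.trans_le hx.1).ne'
  have hint : ∫ x in l * r..r, -deriv h x ≤ ∫ x in l * r..r, 2 * (r ^ 2 * K r) * (x ^ 3)⁻¹ :=
    integral_mono_on hlr_le hac.intervalIntegrable_deriv.neg hcont.intervalIntegrable hdecay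
  rw [intervalIntegral.integral_neg, hac.integral_deriv_eq_sub,
    intervalIntegral.integral_const_mul, integral_inv_pow_three hlr hlr_le] at hint
  have hval : 2 * (r ^ 2 * K r) * (((l * r) ^ 2)⁻¹ - (r ^ 2)⁻¹) / 2 = ((l ^ 2)⁻¹ - 1) * K r := by
    field_simp
  linarith [hdouble r hr hrR]

theorem stmt_18 (h K : ℝ → ℝ) (R l : ℝ) (hR : 0 < R)
    (hl : 0 < l) (hl' : l < 1)
    (hpos : ∀ r : ℝ, 0 < r → 0 < h r)
    (hanti : ∀ r s : ℝ, 0 < r → r ≤ s → h s ≤ h r)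
    (hr2h : ∀ r s : ℝ, 0 < r → r ≤ s → r ^ 2 * h r ≤ s ^ 2 * h s)
    (hK0 : ∀ r : ℝ, 0 < r → 0 ≤ K r)
    (hr2K : ∀ r s : ℝ, 0 < r → r ≤ s → r ^ 2 * K r ≤ s ^ 2 * K s)
    (hderiv : ∀ r : ℝ, 0 < r → deriv h r = -2 * K r / r)
    (hdouble : ∀ r : ℝ, 0 < r → r < R → 2 * h r ≤ h (l * r)) :
    ∀ r : ℝ, 0 < r → r < R → h r ≤ ((l ^ 2)⁻¹ - 1) * K r :=
  stmt_18_general h K R l hl hl' hpos hanti hr2h hr2K hderiv hdouble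
end
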